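/- Let Λ : ℝ → ℝ be measurable with Λ(y) > 0 for every y, locally integrable, and with ∫_x^∞ Λ(y) dy = ∞ for every x. Let h : ℝ → ℝ be nondecreasing and suppose there is x* ∈ [−∞, ∞) such that h(x) > 0 if and only if x > x*. Assume that for every x ∈ ℝ, ∫_x^∞ |h(z)|·Λ(z)·exp(−∫_x^z Λ(y) dy) dz < ∞, and define f(x) := ∫_x^∞ h(z)·Λ(z)·exp(−∫_x^z Λ(y) dy) dz. Then: (i) f(x) > 0 for every x > x*; and (ii) f is locally absolutely continuous with f'(x) = Λ(x)·(f(x) − h(x)) for almost every x ∈ ℝ. -/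

import Mathlib

/-!
Write `L x = ∫₀ˣ Λ` and `g z = h z Λ z e^{-L z}`. The weight factors as
`e^{-∫ₓᶻ Λ} = e^{L x} e^{-L z}`, so `f x = e^{L x} (C - ∫₀ˣ g)` with `C = ∫_{(0,∞)} g`.
Both factors are absolutely continuous on compact intervals (`exp` is Lipschitz on the bounded
range of `L`), and by Lebesgue's differentiation theorem `L' = Λ` and `(∫₀ˣ g)' = g` almost
everywhere, so the product rule gives `f' = Λ f - e^{L} g = Λ (f - h)` a.e.
Positivity is immediate: for `x > x*` the integrand is positive on `(x, ∞)`.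
-/

open MeasureTheory Set Filter
open scoped NNReal

theorem LipschitzOnWith.comp_absolutelyContinuousOnInterval {X Y : Type*} [PseudoMetricSpace X]
    [PseudoMetricSpace Y] {φ : X → Y} {K : ℝ≥0} {s : Set X} {f : ℝ → X} {a b : ℝ}
    (hφ : LipschitzOnWith K φ s) (hfs : MapsTo f (uIcc a b) s)
    (hf : AbsolutelyContinuousOnInterval f a b) :
    AbsolutelyContinuousOnInterval (φ ∘ f) a b := by
  refine squeeze_zero' (Eventually.of_forall fun _ => Finset.sum_nonneg fun _ _ => dist_nonneg)
    ?_ (by simpa using Tendsto.const_mul (K : ℝ) hf)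
  filter_upwards [mem_inf_of_right (mem_principal_self _)] with ⟨n, I⟩ hnI
  rw [Finset.mul_sum]
  exact Finset.sum_le_sum fun i hi =>
    hφ.dist_le_mul _ (hfs (hnI.1 i hi).1) _ (hfs (hnI.1 i hi).2)

theorem ContDiff.comp_absolutelyContinuousOnInterval {F : Type*} [NormedAddCommGroup F]
    [NormedSpace ℝ F] {φ : ℝ → F} (hφ : ContDiff ℝ 1 φ) {f : ℝ → ℝ} {a b : ℝ}
    (hf : AbsolutelyContinuousOnInterval f a b) :
    AbsolutelyContinuousOnInterval (φ ∘ f) a b := by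
  obtain ⟨C, hC⟩ := hf.exists_bound
  obtain ⟨K, hK⟩ := hφ.contDiffOn.exists_lipschitzOnWith (s := Icc (-C) C) one_ne_zero
    (convex_Icc _ _) isCompact_Icc
  exact hK.comp_absolutelyContinuousOnInterval (fun x hx => abs_le.1 (hC x hx)) hf

theorem MeasureTheory.LocallyIntegrable.absolutelyContinuousOnInterval_primitive {f : ℝ → ℝ}
    (hf : LocallyIntegrable f volume) (c a b : ℝ) :
    AbsolutelyContinuousOnInterval (fun x => ∫ t in c..x, f t) a b := by
  have hc : c ∈ uIcc (min c (min a b)) (max c (max a b)) := by simp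
  exact ((hf.integrableOn_isCompact isCompact_uIcc).intervalIntegrable
    |>.absolutelyContinuousOnInterval_intervalIntegral hc).mono
    (uIcc_subset_uIcc (by simp) (by simp))

theorem locallyIntegrable_of_forall_intervalIntegrable {E : Type*} [NormedAddCommGroup E]
    {f : ℝ → E} (hf : ∀ a b, IntervalIntegrable f volume a b) : LocallyIntegrable f volume :=
  fun x => ⟨Icc (x - 1) (x + 1), Icc_mem_nhds (by linarith) (by linarith),
    (intervalIntegrable_iff_integrableOn_Icc_of_le (by linarith)).1 (hf _ _)⟩

theorem locallyIntegrable_of_forall_integrableOn_Ioi {E : Type*} [NormedAddCommGroup E]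
    {f : ℝ → E} (hf : ∀ a, IntegrableOn f (Ioi a)) : LocallyIntegrable f volume :=
  fun x => ⟨Ioi (x - 1), Ioi_mem_nhds (by linarith), hf _⟩

theorem setIntegral_pos_of_forall_pos {X : Type*} [MeasurableSpace X] {μ : Measure X}
    {f : X → ℝ} {s : Set X} (hs : MeasurableSet s) (hμs : μ s ≠ 0)
    (hfi : IntegrableOn f s μ) (hf : ∀ x ∈ s, 0 < f x) : 0 < ∫ x in s, f x ∂μ := by
  rw [setIntegral_pos_iff_support_of_nonneg_ae
    (ae_restrict_of_forall_mem hs fun x hx => (hf x hx).le) hfi,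
    inter_eq_right.2 fun x hx => Function.mem_support.2 (hf x hx).ne']
  exact pos_iff_ne_zero.2 hμs

section ExpPrimitive

variable {Λ g : ℝ → ℝ}

theorem absolutelyContinuousOnInterval_exp_primitive_mul (hΛ : LocallyIntegrable Λ volume)
    (hg : LocallyIntegrable g volume) (C a b : ℝ) :
    AbsolutelyContinuousOnInterval
      (fun x => Real.exp (∫ t in 0..x, Λ t) * (C - ∫ t in 0..x, g t)) a b :=
  (Real.contDiff_exp.comp_absolutelyContinuousOnInterval
    (hΛ.absolutelyContinuousOnInterval_primitive 0 a b)).fun_mul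
    ((contDiff_const.sub contDiff_id).comp_absolutelyContinuousOnInterval
      (hg.absolutelyContinuousOnInterval_primitive 0 a b))

theorem ae_hasDerivAt_exp_primitive_mul (hΛ : LocallyIntegrable Λ volume)
    (hg : LocallyIntegrable g volume) (C : ℝ) :
    ∀ᵐ x, HasDerivAt (fun x => Real.exp (∫ t in 0..x, Λ t) * (C - ∫ t in 0..x, g t))
      (Λ x * (Real.exp (∫ t in 0..x, Λ t) * (C - ∫ t in 0..x, g t))
        - Real.exp (∫ t in 0..x, Λ t) * g x) x := by
  filter_upwards [LocallyIntegrable.ae_hasDerivAt_integral hΛ,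
    LocallyIntegrable.ae_hasDerivAt_integral hg] with x hΛx hgx
  exact ((hΛx 0).exp.fun_mul ((hgx 0).const_sub C)).congr_deriv (by ring)

end ExpPrimitive

section HazardWeight

variable {Λ h : ℝ → ℝ}

theorem exp_neg_intervalIntegral_eq_mul (hΛ : ∀ a b, IntervalIntegrable Λ volume a b)
    (x z : ℝ) :
    Real.exp (-∫ y in x..z, Λ y)
      = Real.exp (∫ y in 0..x, Λ y) * Real.exp (-∫ y in 0..z, Λ y) := by
  rw [← intervalIntegral.integral_interval_sub_left (hΛ 0 z) (hΛ 0 x), ← Real.exp_add]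
  ring_nf

theorem integrableOn_Ioi_mul_exp_neg_intervalIntegral (hΛpos : ∀ y, 0 < Λ y)
    (hΛ : ∀ a b, IntervalIntegrable Λ volume a b) (hh : Measurable h) {x : ℝ}
    (hint : IntegrableOn (fun z => |h z| * Λ z * Real.exp (-∫ y in x..z, Λ y)) (Ioi x)) :
    IntegrableOn (fun z => h z * Λ z * Real.exp (-∫ y in x..z, Λ y)) (Ioi x) := by
  have hmeas : AEStronglyMeasurable (fun z => h z * Λ z * Real.exp (-∫ y in x..z, Λ y)) :=
    (hh.aestronglyMeasurable.mul
      (locallyIntegrable_of_forall_intervalIntegrable hΛ).aestronglyMeasurable).mul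
      (Real.continuous_exp.comp
        (intervalIntegral.continuous_primitive hΛ x).neg).aestronglyMeasurable
  refine (integrable_norm_iff hmeas.restrict).1 (hint.congr (ae_of_all _ fun z => ?_))
  simp only [Real.norm_eq_abs, abs_mul, abs_of_pos (hΛpos z), abs_of_pos (Real.exp_pos _)]

theorem integrableOn_Ioi_mul_exp_neg_primitive (hΛ : ∀ a b, IntervalIntegrable Λ volume a b)
    {x : ℝ} (hint : IntegrableOn (fun z => h z * Λ z * Real.exp (-∫ y in x..z, Λ y)) (Ioi x)) :
    IntegrableOn (fun z => h z * Λ z * Real.exp (-∫ y in 0..z, Λ y)) (Ioi x) :=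
  (hint.const_mul (Real.exp (-∫ y in 0..x, Λ y))).congr (ae_of_all _ fun z => by
    simp only [exp_neg_intervalIntegral_eq_mul hΛ x z, Real.exp_neg (∫ y in 0..x, Λ y)]
    field_simp)

theorem setIntegral_Ioi_mul_exp_neg_intervalIntegral
    (hΛ : ∀ a b, IntervalIntegrable Λ volume a b)
    (hint : ∀ x, IntegrableOn (fun z => h z * Λ z * Real.exp (-∫ y in 0..z, Λ y)) (Ioi x))
    (x : ℝ) :
    ∫ z in Ioi x, h z * Λ z * Real.exp (-∫ y in x..z, Λ y)
      = Real.exp (∫ y in 0..x, Λ y) * ((∫ z in Ioi 0, h z * Λ z * Real.exp (-∫ y in 0..z, Λ y))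
          - ∫ z in 0..x, h z * Λ z * Real.exp (-∫ y in 0..z, Λ y)) := by
  rw [← intervalIntegral.integral_Ioi_sub_Ioi' (hint 0) (hint x), sub_sub_cancel,
    ← integral_const_mul]
  refine setIntegral_congr_fun measurableSet_Ioi fun z _ => ?_
  rw [exp_neg_intervalIntegral_eq_mul hΛ x z]
  ring

end HazardWeight

theorem representation_properties_general (Λ h : ℝ → ℝ) (xs : EReal)
    (hΛpos : ∀ y, 0 < Λ y)
    (hΛloc : ∀ a b : ℝ, IntervalIntegrable Λ volume a b)
    (hmono : Monotone h)
    (hthr : ∀ x : ℝ, 0 < h x ↔ xs < (x : EReal))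
    (hint : ∀ x : ℝ, IntegrableOn
      (fun z => |h z| * Λ z * Real.exp (-∫ y in x..z, Λ y)) (Set.Ioi x))
    (f : ℝ → ℝ)
    (hf : ∀ x : ℝ, f x = ∫ z in Set.Ioi x, h z * Λ z * Real.exp (-∫ y in x..z, Λ y)) :
    (∀ x : ℝ, xs < (x : EReal) → 0 < f x) ∧
    ∃ f' : ℝ → ℝ, (∀ a b : ℝ, IntervalIntegrable f' volume a b) ∧
      (∀ a b : ℝ, f b - f a = ∫ y in a..b, f' y) ∧
      (∀ᵐ (x : ℝ) ∂(volume : Measure ℝ), f' x = Λ x * (f x - h x)) := by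
  have hΛ := locallyIntegrable_of_forall_intervalIntegrable hΛloc
  have hintegrand x :=
    integrableOn_Ioi_mul_exp_neg_intervalIntegral hΛpos hΛloc hmono.measurable (hint x)
  set g := fun z => h z * Λ z * Real.exp (-∫ y in 0..z, Λ y)
  have hg x : IntegrableOn g (Ioi x) :=
    integrableOn_Ioi_mul_exp_neg_primitive hΛloc (hintegrand x)
  have hfeq : f = fun x => Real.exp (∫ y in 0..x, Λ y) * ((∫ z in Ioi 0, g z) - ∫ z in 0..x, g z) :=
    funext fun x => (hf x).trans (setIntegral_Ioi_mul_exp_neg_intervalIntegral hΛloc hg x)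
  have hgloc := locallyIntegrable_of_forall_integrableOn_Ioi hg
  have hAC a b := hfeq ▸ absolutelyContinuousOnInterval_exp_primitive_mul hΛ hgloc _ a b
  refine ⟨fun x hx => ?_, deriv f, fun a b => (hAC a b).intervalIntegrable_deriv,
    fun a b => (hAC a b).integral_deriv_eq_sub.symm, ?_⟩
  · rw [hf x]
    refine setIntegral_pos_of_forall_pos measurableSet_Ioi (by simp) (hintegrand x) fun z hz => ?_
    have hhz : 0 < h z := (hthr z).2 (hx.trans (EReal.coe_lt_coe_iff.2 hz))
    exact mul_pos (mul_pos hhz (hΛpos z)) (Real.exp_pos _)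
  · filter_upwards [ae_hasDerivAt_exp_primitive_mul hΛ hgloc (∫ z in Ioi 0, g z)] with x hx
    rw [← hfeq] at hx
    rw [hx.deriv, hfeq]
    simp only [g, Real.exp_neg]
    field_simp

/-- If `h` is nondecreasing with threshold `x* ∈ [-∞, ∞)` (i.e. `h x > 0 ↔ x > x*`), `Λ` is a
positive, locally integrable hazard rate with `∫_x^∞ Λ = ∞`, and
`f x = ∫_x^∞ h z * Λ z * exp (-∫_x^z Λ) dz` (absolutely convergent), then `f x > 0` for
`x > x*`, and `f` is locally absolutely continuous with `f' x = Λ x * (f x - h x)` a.e. -/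
theorem representation_properties (Λ h : ℝ → ℝ) (xs : EReal)
    (hΛmeas : Measurable Λ) (hΛpos : ∀ y, 0 < Λ y)
    (hΛloc : ∀ a b : ℝ, IntervalIntegrable Λ volume a b)
    (hΛinf : ∀ x : ℝ, (∫⁻ y in Set.Ioi x, ENNReal.ofReal (Λ y)) = ⊤)
    (hmono : Monotone h) (hxs : xs ≠ ⊤)
    (hthr : ∀ x : ℝ, 0 < h x ↔ xs < (x : EReal))
    (hint : ∀ x : ℝ, IntegrableOn
      (fun z => |h z| * Λ z * Real.exp (-∫ y in x..z, Λ y)) (Set.Ioi x))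
    (f : ℝ → ℝ)
    (hf : ∀ x : ℝ, f x = ∫ z in Set.Ioi x, h z * Λ z * Real.exp (-∫ y in x..z, Λ y)) :
    (∀ x : ℝ, xs < (x : EReal) → 0 < f x) ∧
    ∃ f' : ℝ → ℝ, (∀ a b : ℝ, IntervalIntegrable f' volume a b) ∧
      (∀ a b : ℝ, f b - f a = ∫ y in a..b, f' y) ∧
      (∀ᵐ (x : ℝ) ∂(volume : Measure ℝ), f' x = Λ x * (f x - h x)) :=
  representation_properties_general Λ h xs hΛpos hΛloc hmono hthr hint f hf
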